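/- arXiv:2312.06906 — 2 statements merged into one kernel-verified Lean document; each statement's English description precedes it below -/
import Mathlib

section
/- Let m ≥ 2, let k, ℓ be integers, and suppose the characteristic polynomial of A_X has integer coefficients. If k + ℓ is odd, then no adjacency perfect state transfer occurs in X∨Y between vertices of X: for all distinct u, v ∈ {1,…,m} and all τ ∈ ℝ, |exp(iτA)_{u,v}| ≠ 1. -/
open Matrix Complex

/-- Transition matrix `exp(itM)` of the continuous quantum walk whose Hamiltonian is the
real symmetric matrix `M` (the matrix exponential is taken over `ℂ`). -/
noncomputable def transU {N : Type*} [Fintype N] [DecidableEq N]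
    (M : Matrix N N ℝ) (t : ℝ) : Matrix N N ℂ :=
  NormedSpace.exp ((Complex.I * (t : ℂ)) • M.map (fun x : ℝ => (x : ℂ)))

/-- Laplacian matrix of the join `X ∨ Y` of two weighted graphs with Laplacian
matrices `LX` and `LY`. -/
noncomputable def joinL (m n : ℕ) (LX : Matrix (Fin m) (Fin m) ℝ)
    (LY : Matrix (Fin n) (Fin n) ℝ) :
    Matrix (Fin m ⊕ Fin n) (Fin m ⊕ Fin n) ℝ :=
  Matrix.fromBlocks (LX + (n : ℝ) • (1 : Matrix (Fin m) (Fin m) ℝ))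
    (-(Matrix.of fun _ _ => (1 : ℝ)))
    (-(Matrix.of fun _ _ => (1 : ℝ)))
    (LY + (m : ℝ) • (1 : Matrix (Fin n) (Fin n) ℝ))

/-- Adjacency matrix of the join `X ∨ Y` of two weighted graphs with adjacency
matrices `AX` and `AY`. -/
noncomputable def joinA (m n : ℕ) (AX : Matrix (Fin m) (Fin m) ℝ)
    (AY : Matrix (Fin n) (Fin n) ℝ) :
    Matrix (Fin m ⊕ Fin n) (Fin m ⊕ Fin n) ℝ :=
  Matrix.fromBlocks AX (Matrix.of fun _ _ => (1 : ℝ))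
    (Matrix.of fun _ _ => (1 : ℝ)) AY

/-- `lam` is an eigenvalue of the matrix `M`. -/
def IsEigenvalue {N : Type*} [Fintype N] (M : Matrix N N ℝ) (lam : ℝ) : Prop :=
  ∃ w : N → ℝ, w ≠ 0 ∧ M.mulVec w = lam • w

/-- The eigenvalue support `σ_u(M)` of the vertex `u`: all eigenvalues `lam` of `M` having
an eigenvector `w` with `w u ≠ 0`. -/
def eigSupport {N : Type*} [Fintype N] (M : Matrix N N ℝ) (u : N) : Set ℝ :=
  {lam | ∃ w : N → ℝ, w ≠ 0 ∧ M.mulVec w = lam • w ∧ w u ≠ 0}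

/-- Vertices `u` and `v` are strongly cospectral with respect to `M`: for each eigenvalue,
either all eigenvectors have equal `u`,`v` entries, or all have opposite `u`,`v` entries. -/
def StronglyCospectral {N : Type*} [Fintype N] (M : Matrix N N ℝ) (u v : N) : Prop :=
  ∀ lam : ℝ, IsEigenvalue M lam →
    (∀ w : N → ℝ, M.mulVec w = lam • w → w u = w v) ∨
    (∀ w : N → ℝ, M.mulVec w = lam • w → w u = -(w v))

/-- `σ_{uv}^-(M)`: eigenvalues in the support of `u` all of whose eigenvectors `w`
satisfy `w u = - w v`. -/
def sigmaMinus {N : Type*} [Fintype N] (M : Matrix N N ℝ) (u v : N) : Set ℝ :=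
  {lam | lam ∈ eigSupport M u ∧ ∀ w : N → ℝ, M.mulVec w = lam • w → w u = -(w v)}

/-- The vertex `u` is periodic with respect to `M`. -/
noncomputable def PeriodicAt {N : Type*} [Fintype N] [DecidableEq N]
    (M : Matrix N N ℝ) (u : N) : Prop :=
  ∃ τ : ℝ, 0 < τ ∧ ‖transU M τ u u‖ = 1

/-- Perfect state transfer occurs between vertices `u` and `v` with respect to `M`. -/
noncomputable def HasPST {N : Type*} [Fintype N] [DecidableEq N]
    (M : Matrix N N ℝ) (u v : N) : Prop :=
  ∃ τ : ℝ, 0 < τ ∧ ‖transU M τ u v‖ = 1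

/-!
If `|U(τ)_{uv}| = 1` for the unitary symmetric matrix `U(τ) = exp(iτA)`, then `γ = U(τ)_{uv}` is the
only nonzero entry of rows `u` and `v`, so `e^{iτθ} w_u = γ w_v` and `e^{iτθ} w_v = γ w_u` for every
eigenpair `(θ, w)` of `A`. The join has the eigenvalues `θ± = (k + ℓ ± √Δ) / 2`,
`Δ = (k - ℓ)² + 4mn`, with eigenvectors constant on `X` and on `Y`, so `e^{iτθ±} = γ`; an
eigenvector `x` of `A_X` orthogonal to `𝟙` with `x_u ≠ x_v`, extended by zero, gives an eigenvalue
`μ` with `e^{iτμ} = -γ`. Hence both `τ(θ± - μ)` are odd multiples of `π`, which yields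
`(k + ℓ - 2μ) a = √Δ b` for integers `a, b` with `a + b` odd. As `μ` is an algebraic integer,
`(k + ℓ - 2μ)²` is then an integer `N`, and `N` is odd because `μ (k + ℓ - μ) = ((k + ℓ)² - N) / 4`
is an integer too. But `N a² = Δ b²` with `N`, `Δ` and `a + b` odd is impossible modulo `2`.
-/

open scoped Real

namespace Matrix

variable {ι : Type*} [Fintype ι] [DecidableEq ι]

theorem exp_mulVec_of_mulVec_eq_smul {M : Matrix ι ι ℂ} {x : ι → ℂ} {c : ℂ}
    (h : M *ᵥ x = c • x) : NormedSpace.exp M *ᵥ x = Complex.exp c • x := by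
  let _ : NormedRing (Matrix ι ι ℂ) := Matrix.linftyOpNormedRing
  let _ : NormedAlgebra ℂ (Matrix ι ι ℂ) := Matrix.linftyOpNormedAlgebra
  have hpow : ∀ j : ℕ, M ^ j *ᵥ x = c ^ j • x := by
    intro j
    induction j with
    | zero => simp
    | succ j ih => rw [pow_succ', ← mulVec_mulVec, ih, mulVec_smul, h, smul_smul, pow_succ]
  have hM := (NormedSpace.exp_series_hasSum_exp' (𝕂 := ℂ) M).map (mulVec.addMonoidHomLeft x)
    (continuous_id.matrix_mulVec continuous_const)
  have hc := (NormedSpace.exp_series_hasSum_exp' (𝕂 := ℂ) c).smul_const x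
  rw [← Complex.exp_eq_exp_ℂ] at hc
  refine hM.unique (hc.congr_fun fun j => ?_)
  change ((j.factorial : ℂ)⁻¹ • M ^ j) *ᵥ x = _
  rw [smul_mulVec, hpow, smul_smul, smul_eq_mul]

variable {𝕜 : Type*} [RCLike 𝕜]

theorem sum_norm_sq_apply_of_mem_unitaryGroup {U : Matrix ι ι 𝕜} (hU : U ∈ unitaryGroup ι 𝕜)
    (i : ι) : ∑ j, ‖U i j‖ ^ 2 = 1 := by
  have h := congrFun (congrFun (mem_unitaryGroup_iff.mp hU) i) i
  simp only [mul_apply, star_apply, RCLike.star_def, RCLike.mul_conj, one_apply_eq] at h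
  exact_mod_cast h

theorem apply_eq_zero_of_norm_apply_eq_one {U : Matrix ι ι 𝕜} (hU : U ∈ unitaryGroup ι 𝕜)
    {i j j' : ι} (h : ‖U i j‖ = 1) (hj' : j' ≠ j) : U i j' = 0 := by
  have hrest : ∑ x ∈ Finset.univ.erase j, ‖U i x‖ ^ 2 = 0 := by
    have := Finset.add_sum_erase _ (fun x => ‖U i x‖ ^ 2) (Finset.mem_univ j)
    rw [sum_norm_sq_apply_of_mem_unitaryGroup hU, h] at this
    linarith
  have := (Finset.sum_eq_zero_iff_of_nonneg fun x _ => sq_nonneg ‖U i x‖).mp hrest j'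
    (Finset.mem_erase.mpr ⟨hj', Finset.mem_univ _⟩)
  simpa using this

theorem mulVec_apply_of_norm_apply_eq_one {U : Matrix ι ι 𝕜} (hU : U ∈ unitaryGroup ι 𝕜)
    {i j : ι} (h : ‖U i j‖ = 1) (w : ι → 𝕜) : (U *ᵥ w) i = U i j * w j :=
  Finset.sum_eq_single j
    (fun j' _ hj' => by simp [apply_eq_zero_of_norm_apply_eq_one hU h hj']) (by simp)

theorem IsSymm.exists_mulVec_eq_smul_apply_ne {A : Matrix ι ι ℝ} (hA : A.IsSymm) {u v : ι}
    (huv : u ≠ v) : ∃ (μ : ℝ) (y : ι → ℝ), A *ᵥ y = μ • y ∧ y u ≠ y v := by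
  have hH : A.IsHermitian := by rwa [IsHermitian, conjTranspose_eq_transpose_of_trivial]
  by_contra! h
  -- `y ↦ y u - y v` vanishes on an eigenbasis, hence everywhere.
  let f : EuclideanSpace ℝ ι →ₗ[ℝ] ℝ :=
    ((EuclideanSpace.proj u - EuclideanSpace.proj v : EuclideanSpace ℝ ι →L[ℝ] ℝ) :)
  have hf : f = 0 := hH.eigenvectorBasis.toBasis.ext fun j => by
    simpa [f, sub_eq_zero] using h _ _ (hH.mulVec_eigenvectorBasis j)
  simpa [f, huv] using LinearMap.congr_fun hf (EuclideanSpace.single u 1)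

theorem IsSymm.exists_mulVec_eq_smul_sum_eq_zero_apply_ne {A : Matrix ι ι ℝ} (hA : A.IsSymm)
    {k : ℝ} (hrow : ∀ i, ∑ j, A i j = k) {u v : ι} (huv : u ≠ v) :
    ∃ (μ : ℝ) (x : ι → ℝ), A *ᵥ x = μ • x ∧ ∑ i, x i = 0 ∧ x u ≠ x v := by
  obtain ⟨μ, y, hy, hyuv⟩ := hA.exists_mulVec_eq_smul_apply_ne huv
  have hk : (μ - k) * ∑ i, y i = 0 := by
    have hcol : ∀ j, ∑ i, A i j = k := fun j => by simpa [hA.apply] using hrow j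
    have h := congrArg (fun z => ∑ i, z i) hy
    simp only [mulVec, dotProduct, Pi.smul_apply, smul_eq_mul] at h
    rw [Finset.sum_comm] at h
    simp only [← Finset.sum_mul, hcol, ← Finset.mul_sum] at h
    linear_combination -h
  set c := (∑ i, y i) / Fintype.card ι
  refine ⟨μ, fun i => y i - c, ?_, ?_, by simpa using hyuv⟩
  · ext i
    have := congrFun hy i
    simp only [mulVec, dotProduct, Pi.smul_apply, smul_eq_mul] at this ⊢
    simp only [mul_sub, Finset.sum_sub_distrib, ← Finset.sum_mul, hrow, this, c]
    linear_combination hk / (Fintype.card ι : ℝ)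
  · have : (Fintype.card ι : ℝ) ≠ 0 := by exact_mod_cast (Fintype.card_pos_iff.mpr ⟨u⟩).ne'
    simp [Finset.sum_sub_distrib, c, mul_div_cancel₀ _ this]

theorem isIntegral_of_mulVec_eq_smul {K : Type*} [Field K] {A : Matrix ι ι K}
    (hA : ∀ i, ∃ z : ℤ, A.charpoly.coeff i = z) {μ : K} {x : ι → K} (hx : x ≠ 0)
    (h : A *ᵥ x = μ • x) : IsIntegral ℤ μ := by
  have hlifts : A.charpoly ∈ Polynomial.lifts (Int.castRingHom K) :=
    Polynomial.lifts_iff_coeff_lifts _ |>.mpr fun i => (hA i).imp fun z hz => hz.symm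
  obtain ⟨p, hp, -, hpm⟩ := Polynomial.lifts_and_degree_eq_and_monic hlifts A.charpoly_monic
  refine ⟨p, hpm, ?_⟩
  rw [Polynomial.eval₂_eq_eval_map, algebraMap_int_eq, hp, eval_charpoly,
    ← exists_mulVec_eq_zero_iff]
  exact ⟨x, hx, by rw [sub_mulVec, h]; simp⟩

end Matrix

section TransitionMatrix

variable {N : Type*} [Fintype N] [DecidableEq N] {M : Matrix N N ℝ}

theorem transU_isSymm (hM : M.IsSymm) (t : ℝ) : (transU M t).IsSymm :=
  ((hM.map _).smul _).exp

theorem transU_mem_unitaryGroup (hM : M.IsSymm) (t : ℝ) : transU M t ∈ unitaryGroup N ℂ := by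
  set S := (Complex.I * (t : ℂ)) • M.map (fun x : ℝ => (x : ℂ))
  have hS : star S = -S := by
    have hMc : (M.map (fun x : ℝ => (x : ℂ)))ᴴ = M.map (fun x : ℝ => (x : ℂ)) := by
      rw [← conjTranspose_map _ (fun x => (Complex.conj_ofReal x).symm),
        conjTranspose_eq_transpose_of_trivial, hM.eq]
    simp [S, star_eq_conjTranspose, hMc]
  rw [mem_unitaryGroup_iff, transU, star_eq_conjTranspose, ← exp_conjTranspose,
    ← star_eq_conjTranspose, hS, ← exp_add_of_commute _ _ (Commute.refl S).neg_right,
    add_neg_cancel, NormedSpace.exp_zero]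

theorem transU_mulVec_of_mulVec_eq_smul {w : N → ℝ} {θ : ℝ} (hw : M *ᵥ w = θ • w) (t : ℝ) :
    transU M t *ᵥ (fun i => (w i : ℂ)) =
      Complex.exp ((t * θ : ℝ) * Complex.I) • fun i => (w i : ℂ) := by
  refine exp_mulVec_of_mulVec_eq_smul ?_
  have hc : M.map (fun x : ℝ => (x : ℂ)) *ᵥ (fun i => (w i : ℂ)) =
      (θ : ℂ) • fun i => (w i : ℂ) := by
    ext i
    have := congrArg (fun r : ℝ => (r : ℂ)) (congrFun hw i)
    simp only [mulVec, dotProduct, Pi.smul_apply, smul_eq_mul, map_apply] at this ⊢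
    push_cast at this
    exact this
  rw [smul_mulVec, hc, smul_smul]
  congr 1
  push_cast
  ring

end TransitionMatrix

section PerfectStateTransfer

variable {N : Type*} [Fintype N] [DecidableEq N] {M : Matrix N N ℝ} {t : ℝ} {u v : N}
  {w : N → ℝ} {θ : ℝ}

theorem exp_mul_apply_eq_transU_mul_of_norm_eq_one (hM : M.IsSymm)
    (hPST : ‖transU M t u v‖ = 1) (hw : M *ᵥ w = θ • w) :
    Complex.exp ((t * θ : ℝ) * I) * w u = transU M t u v * w v ∧
      Complex.exp ((t * θ : ℝ) * I) * w v = transU M t u v * w u := by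
  have hU := transU_mem_unitaryGroup hM t
  have hvu : transU M t v u = transU M t u v := (transU_isSymm hM t).apply u v
  have hUw := transU_mulVec_of_mulVec_eq_smul hw t
  have hPST' : ‖transU M t v u‖ = 1 := hvu ▸ hPST
  constructor
  · simpa [mulVec_apply_of_norm_apply_eq_one hU hPST] using (congrFun hUw u).symm
  · simpa [mulVec_apply_of_norm_apply_eq_one hU hPST', hvu] using (congrFun hUw v).symm

theorem exp_eq_transU_of_norm_eq_one_of_apply_eq (hM : M.IsSymm)
    (hPST : ‖transU M t u v‖ = 1) (hw : M *ᵥ w = θ • w) (huv : w u = w v) (hu : w u ≠ 0) :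
    Complex.exp ((t * θ : ℝ) * I) = transU M t u v := by
  have h := (exp_mul_apply_eq_transU_mul_of_norm_eq_one hM hPST hw).1
  rw [← huv] at h
  exact mul_right_cancel₀ (by exact_mod_cast hu) h

theorem exp_eq_neg_transU_of_norm_eq_one_of_apply_ne (hM : M.IsSymm)
    (hPST : ‖transU M t u v‖ = 1) (hw : M *ᵥ w = θ • w) (huv : w u ≠ w v) :
    Complex.exp ((t * θ : ℝ) * I) = -transU M t u v := by
  obtain ⟨h₁, h₂⟩ := exp_mul_apply_eq_transU_mul_of_norm_eq_one hM hPST hw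
  have h : (Complex.exp ((t * θ : ℝ) * I) + transU M t u v) * (w u - w v : ℂ) = 0 := by
    linear_combination h₁ - h₂
  have huv' : (w u - w v : ℂ) ≠ 0 := sub_ne_zero.mpr (by exact_mod_cast huv)
  exact eq_neg_of_add_eq_zero_left ((mul_eq_zero.mp h).resolve_right huv')

end PerfectStateTransfer

section Join

variable {m n : ℕ} {AX : Matrix (Fin m) (Fin m) ℝ} {AY : Matrix (Fin n) (Fin n) ℝ}

theorem joinA_isSymm (hX : AX.IsSymm) (hY : AY.IsSymm) : (joinA m n AX AY).IsSymm :=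
  IsSymm.fromBlocks hX rfl hY

theorem joinA_mulVec_sumElim_zero {x : Fin m → ℝ} {μ : ℝ} (hx : AX *ᵥ x = μ • x)
    (hsum : ∑ i, x i = 0) : joinA m n AX AY *ᵥ Sum.elim x 0 = μ • Sum.elim x 0 := by
  rw [joinA, fromBlocks_mulVec, Sum.elim_comp_inl, Sum.elim_comp_inr, hx]
  ext (i | j) <;> simp [mulVec, dotProduct, hsum]

theorem joinA_mulVec_sumElim_const {k ℓ θ : ℝ} (hX : ∀ i, ∑ j, AX i j = k)
    (hY : ∀ i, ∑ j, AY i j = ℓ) (hn : n ≠ 0) (hθ : (θ - k) * (θ - ℓ) = m * n) :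
    joinA m n AX AY *ᵥ Sum.elim (fun _ => 1) (fun _ => (θ - k) / n) =
      θ • Sum.elim (fun _ => 1) (fun _ => (θ - k) / n) := by
  have hn' : (n : ℝ) ≠ 0 := by exact_mod_cast hn
  rw [joinA, fromBlocks_mulVec]
  ext (i | j)
  · simp only [Sum.elim_comp_inl, Sum.elim_comp_inr, Sum.elim_inl, Pi.add_apply, mulVec,
      dotProduct, mul_one, hX, of_apply, one_mul, Finset.sum_const, Finset.card_univ,
      Fintype.card_fin, nsmul_eq_mul, Pi.smul_apply, smul_eq_mul]
    field_simp
    ring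
  · simp only [Sum.elim_comp_inl, Sum.elim_comp_inr, Sum.elim_inr, Pi.add_apply, mulVec,
      dotProduct, of_apply, mul_one, Finset.sum_const, Finset.card_univ, Fintype.card_fin,
      nsmul_eq_mul, ← Finset.sum_mul, hY, Pi.smul_apply, smul_eq_mul]
    field_simp
    linear_combination -hθ

end Join

theorem Int.mul_sq_ne_mul_sq_of_odd {N Δ a b : ℤ} (hN : Odd N) (hΔ : Odd Δ) (hab : Odd (a + b)) :
    N * a ^ 2 ≠ Δ * b ^ 2 := by
  intro h
  have := congrArg Even h
  rw [← Int.not_even_iff_odd] at hN hΔ hab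
  simp only [Int.even_mul, Int.even_pow, hN, hΔ, Int.even_add] at this hab
  tauto

theorem exists_int_eq_of_isIntegral_of_eq_ratCast {K : Type*} [Field K] [CharZero K] {x : K}
    (hx : IsIntegral ℤ x) {q : ℚ} (hq : x = q) : ∃ z : ℤ, x = z := by
  have hq' : IsIntegral ℤ q :=
    (isIntegral_algebraMap_iff (algebraMap ℚ K).injective).mp (by simpa [hq] using hx)
  obtain ⟨z, hz⟩ := IsIntegrallyClosed.isIntegral_iff.mp hq'
  exact ⟨z, by rw [hq, ← hz]; simp⟩

theorem exists_odd_eq_sq_of_isIntegral {K : Type*} [Field K] [CharZero K] {μ : K}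
    (hμ : IsIntegral ℤ μ) {s : ℤ} (hs : Odd s) {q : ℚ} (hq : (s - 2 * μ) ^ 2 = q) :
    ∃ N : ℤ, Odd N ∧ (s - 2 * μ) ^ 2 = N := by
  have hs' : IsIntegral ℤ (s : K) := isIntegral_intCast s
  have ht : IsIntegral ℤ (s - 2 * μ) := by rw [two_mul]; exact hs'.sub (hμ.add hμ)
  obtain ⟨N, hN⟩ := exists_int_eq_of_isIntegral_of_eq_ratCast (ht.pow 2) hq
  -- `μ (s - μ) = (s² - N) / 4` is then rational and integral as well.
  obtain ⟨Z, hZ⟩ := exists_int_eq_of_isIntegral_of_eq_ratCast (hμ.mul (hs'.sub hμ))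
    (q := (s ^ 2 - N : ℤ) / 4) (by push_cast; linear_combination -hN / 4)
  have h4 : s ^ 2 - N = 4 * Z := by
    have : ((s ^ 2 - N : ℤ) : K) = (4 * Z : ℤ) := by push_cast; linear_combination hN + 4 * hZ
    exact_mod_cast this
  refine ⟨N, ?_, hN⟩
  obtain ⟨c, hc⟩ := hs.pow (n := 2)
  exact ⟨c - 2 * Z, by linarith⟩

theorem exists_odd_sub_eq_mul_pi_of_exp_eq_neg {x y : ℝ}
    (h : Complex.exp (x * I) = -Complex.exp (y * I)) : ∃ P : ℤ, Odd P ∧ x - y = P * π := by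
  have h' : Complex.exp (x * I) = Complex.exp ((y + π : ℝ) * I) := by
    push_cast; rw [h, add_mul, Complex.exp_add, Complex.exp_pi_mul_I, mul_neg_one]
  obtain ⟨n, hn⟩ := Complex.exp_eq_exp_iff_exists_int.mp h'
  refine ⟨2 * n + 1, odd_two_mul_add_one n, ?_⟩
  have hx : (x : ℂ) = (y + π + n * (2 * π) : ℝ) :=
    mul_right_cancel₀ I_ne_zero (hn.trans (by push_cast; ring))
  rw [ofReal_inj.mp hx]
  push_cast
  ring

theorem false_of_sub_two_mul_mul_eq_mul {s Δ a b : ℤ} (hs : Odd s) (hΔ : Odd Δ)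
    (hab : Odd (a + b)) {μ D : ℝ} (hμ : IsIntegral ℤ μ) (hD : D ^ 2 = Δ)
    (h : (s - 2 * μ) * a = D * b) : False := by
  have hsq : (s - 2 * μ) ^ 2 * a ^ 2 = Δ * b ^ 2 := by
    rw [← hD]; linear_combination ((s - 2 * μ) * a + D * b) * h
  obtain ⟨N, hN, hNab⟩ : ∃ N : ℤ, Odd N ∧ N * a ^ 2 = Δ * b ^ 2 := by
    rcases eq_or_ne a 0 with rfl | ha
    · exact ⟨1, odd_one, by exact_mod_cast (by simpa using hsq : (0 : ℝ) = Δ * b ^ 2)⟩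
    · obtain ⟨N, hN, hNeq⟩ := exists_odd_eq_sq_of_isIntegral hμ hs (q := Δ * b ^ 2 / a ^ 2)
        (by push_cast; rw [eq_div_iff (by positivity)]; exact hsq)
      exact ⟨N, hN, by exact_mod_cast hNeq ▸ hsq⟩
  exact Int.mul_sq_ne_mul_sq_of_odd hN hΔ hab hNab

theorem false_of_odd_phases {s Δ P R : ℤ} (hs : Odd s) (hΔ : Odd Δ) (hP : Odd P) (hR : Odd R)
    {μ D τ : ℝ} (hμ : IsIntegral ℤ μ) (hD : D ^ 2 = Δ)
    (hplus : τ * ((s + D) / 2) - τ * μ = P * π) (hminus : τ * ((s - D) / 2) - τ * μ = R * π) :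
    False := by
  obtain ⟨p, rfl⟩ := hP
  obtain ⟨r, rfl⟩ := hR
  refine false_of_sub_two_mul_mul_eq_mul hs hΔ (a := p - r) (b := p + r + 1) ⟨p, by ring⟩ hμ hD ?_
  have h : 2 * π * ((s - 2 * μ) * (p - r : ℤ) - D * (p + r + 1 : ℤ)) = 0 := by
    push_cast at hplus hminus ⊢
    linear_combination -(s - 2 * μ) * (hplus - hminus) + D * (hplus + hminus)
  simpa [sub_eq_zero, Real.pi_ne_zero] using h

theorem stmt14_general (m n : ℕ) (hn : 1 ≤ n) (k ℓ : ℤ)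
    (AX : Matrix (Fin m) (Fin m) ℝ) (AY : Matrix (Fin n) (Fin n) ℝ)
    (hAXsymm : AX.IsSymm)
    (hAXrow : ∀ i, ∑ j, AX i j = (k : ℝ))
    (hAYsymm : AY.IsSymm)
    (hAYrow : ∀ i, ∑ j, AY i j = (ℓ : ℝ))
    (hAXcharpoly : ∀ i, ∃ z : ℤ, (Matrix.charpoly AX).coeff i = (z : ℝ))
    (hodd : Odd (k + ℓ)) :
    ∀ (u v : Fin m), u ≠ v → ∀ τ : ℝ,
      ‖transU (joinA m n AX AY) τ (Sum.inl u) (Sum.inl v)‖ ≠ 1 := by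
  intro u v huv τ hPST
  have hA := joinA_isSymm hAXsymm hAYsymm
  obtain ⟨μ, x, hx, hxsum, hxuv⟩ :=
    hAXsymm.exists_mulVec_eq_smul_sum_eq_zero_apply_ne hAXrow huv
  have hμ := isIntegral_of_mulVec_eq_smul hAXcharpoly (fun h => hxuv (by simp [h])) hx
  have hμphase := exp_eq_neg_transU_of_norm_eq_one_of_apply_ne hA hPST
    (joinA_mulVec_sumElim_zero hx hxsum) (by simpa using hxuv)
  set Δ : ℤ := (k - ℓ) ^ 2 + 4 * m * n
  have hkℓ : Odd (k - ℓ) := by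
    rw [show k - ℓ = k + ℓ - 2 * ℓ by ring]; exact hodd.sub_even (even_two_mul ℓ)
  have hΔ : Odd Δ := hkℓ.pow.add_even ⟨2 * (m : ℤ) * n, by ring⟩
  have hD : √(Δ : ℝ) ^ 2 = Δ := Real.sq_sqrt (by positivity)
  -- The join has eigenvalues `(k + ℓ ± √Δ) / 2`, with eigenvectors constant on `X` and on `Y`.
  have hphase : ∀ ε : ℝ, ε ^ 2 = 1 → ∃ P : ℤ, Odd P ∧
      τ * (((k + ℓ : ℤ) + ε * √(Δ : ℝ)) / 2) - τ * μ = P * π := fun ε hε => by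
    refine exists_odd_sub_eq_mul_pi_of_exp_eq_neg ?_
    rw [hμphase, neg_neg]
    refine exp_eq_transU_of_norm_eq_one_of_apply_eq hA hPST
      (joinA_mulVec_sumElim_const hAXrow hAYrow (Nat.one_le_iff_ne_zero.mp hn) ?_) rfl one_ne_zero
    simp only [Δ] at hD ⊢
    push_cast at hD ⊢
    linear_combination (ε ^ 2 * hD + ((k - ℓ) ^ 2 + 4 * m * n) * hε) / 4
  obtain ⟨P, hP, hplus⟩ := hphase 1 (one_pow 2)
  obtain ⟨R, hR, hminus⟩ := hphase (-1) (by norm_num)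
  exact false_of_odd_phases hodd hΔ hP hR hμ hD (by simpa using hplus)
    (by simpa [← sub_eq_add_neg] using hminus)

theorem stmt14 (m n : ℕ) (hm : 2 ≤ m) (hn : 1 ≤ n) (k ℓ : ℤ)
    (AX : Matrix (Fin m) (Fin m) ℝ) (AY : Matrix (Fin n) (Fin n) ℝ)
    (hAXsymm : AX.IsSymm) (hAXnonneg : ∀ i j, 0 ≤ AX i j)
    (hAXrow : ∀ i, ∑ j, AX i j = (k : ℝ))
    (hAYsymm : AY.IsSymm) (hAYnonneg : ∀ i j, 0 ≤ AY i j)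
    (hAYrow : ∀ i, ∑ j, AY i j = (ℓ : ℝ))
    (hAXcharpoly : ∀ i, ∃ z : ℤ, (Matrix.charpoly AX).coeff i = (z : ℝ))
    (hodd : Odd (k + ℓ)) :
    ∀ (u v : Fin m), u ≠ v → ∀ τ : ℝ,
      ‖transU (joinA m n AX AY) τ (Sum.inl u) (Sum.inl v)‖ ≠ 1 :=
  stmt14_general m n hn k ℓ AX AY hAXsymm hAXrow hAYsymm hAYrow hAXcharpoly hodd
end

section
/- Let m ≥ 2 and let u ≠ v be indices in {1,…,m} such that the u-th and v-th rows of L_X are zero (u and v are isolated vertices of X). Then perfect state transfer occurs between u and v with respect to the join Laplacian L if and only if m = 2 and n ≡ 2 (mod 4). -/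
open Matrix Complex

/-! For an isolated vertex `v` of `X`, the basis vector `e_v` of the join splits into three
eigenvectors of its Laplacian `L`: the all-ones vector (eigenvalue `0`), the vector equal to `n`
on `X` and `-m` on `Y` (eigenvalue `m + n`), and `e_v - 𝟙_X / m` (eigenvalue `n`). Hence
`exp(itL)_{uv} = 1/(m+n) + n/(m(m+n)) e^{i(m+n)t} - e^{int}/m` for every `u ≠ v` in `X`.
The three moduli add up to `2/m`, so modulus `1` forces `m = 2`; then, `ℂ` being strictly
convex, it forces `e^{i(n+2)t} = 1` and `e^{int} = -1`, which is possible iff `n ≡ 2 (mod 4)`. -/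

theorem Matrix.pow_mulVec_of_mulVec_eq_smul {N R : Type*} [Fintype N] [DecidableEq N]
    [CommSemiring R] {A : Matrix N N R} {x : N → R} {μ : R} (h : A *ᵥ x = μ • x) (k : ℕ) :
    (A ^ k) *ᵥ x = μ ^ k • x := by
  induction k with
  | zero => simp
  | succ k ih => rw [pow_succ, ← mulVec_mulVec, h, mulVec_smul, ih, smul_smul, pow_succ']

theorem Matrix.exp_mulVec_of_mulVec_eq_smul_s16 {N : Type*} [Fintype N] [DecidableEq N]
    {A : Matrix N N ℂ} {x : N → ℂ} {μ : ℂ} (h : A *ᵥ x = μ • x) :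
    NormedSpace.exp A *ᵥ x = cexp μ • x := by
  let _ : NormedRing (Matrix N N ℂ) := Matrix.linftyOpNormedRing
  let _ : NormedAlgebra ℂ (Matrix N N ℂ) := Matrix.linftyOpNormedAlgebra
  have hA := (NormedSpace.exp_series_hasSum_exp' (𝕂 := ℂ) A).map (mulVec.addMonoidHomLeft x)
    (continuous_id.matrix_mulVec continuous_const)
  have hμ := (NormedSpace.exp_series_hasSum_exp' (𝕂 := ℂ) μ).smul_const x
  refine hA.unique ?_
  rw [Complex.exp_eq_exp_ℂ]
  convert hμ using 2 with k
  simp [mulVec.addMonoidHomLeft, smul_mulVec, pow_mulVec_of_mulVec_eq_smul h, smul_smul]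

section TransitionMatrix

variable {N : Type*} [Fintype N] [DecidableEq N]

theorem transU_mulVec_ofReal_of_mulVec_eq_smul {M : Matrix N N ℝ} {w : N → ℝ} {μ : ℝ}
    (h : M *ᵥ w = μ • w) (t : ℝ) :
    transU M t *ᵥ (fun i => (w i : ℂ)) = cexp ((μ * t : ℝ) * I) • fun i => (w i : ℂ) := by
  have hreal : (M.map (↑) *ᵥ fun i => (w i : ℂ)) = fun i => ((M *ᵥ w) i : ℂ) := by
    ext i
    simp [mulVec, dotProduct]
  refine exp_mulVec_of_mulVec_eq_smul_s16 ?_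
  ext i
  simp only [smul_mulVec, hreal, h, Pi.smul_apply, smul_eq_mul]
  push_cast
  ring

theorem transU_apply_eq_mulVec_single (M : Matrix N N ℝ) (t : ℝ) (i j : N) :
    transU M t i j = (transU M t *ᵥ fun k => ((Pi.single j 1 : N → ℝ) k : ℂ)) i := by
  have : (fun k => ((Pi.single j 1 : N → ℝ) k : ℂ)) = Pi.single j 1 := by
    ext k
    by_cases hk : k = j <;> simp [hk]
  rw [this, mulVec_single_one, col_apply]

end TransitionMatrix

section Join

variable {m n : ℕ} {LX : Matrix (Fin m) (Fin m) ℝ} {LY : Matrix (Fin n) (Fin n) ℝ}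

theorem joinL_mulVec_sum_elim (x : Fin m → ℝ) (y : Fin n → ℝ) :
    joinL m n LX LY *ᵥ Sum.elim x y =
      Sum.elim (LX *ᵥ x + (n : ℝ) • x - fun _ => ∑ j, y j)
        (LY *ᵥ y + (m : ℝ) • y - fun _ => ∑ i, x i) := by
  simp only [joinL, fromBlocks_mulVec, add_mulVec, smul_mulVec, one_mulVec, neg_mulVec,
    Sum.elim_comp_inl, Sum.elim_comp_inr]
  congr 1 <;> ext i <;> simp [mulVec, dotProduct] <;> ring

theorem joinL_mulVec_sum_elim_const (hX : ∀ i, ∑ j, LX i j = 0) (hY : ∀ i, ∑ j, LY i j = 0)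
    (α β : ℝ) :
    joinL m n LX LY *ᵥ Sum.elim (fun _ => α) (fun _ => β) =
      Sum.elim (fun _ => n * (α - β)) (fun _ => m * (β - α)) := by
  rw [joinL_mulVec_sum_elim]
  congr 1 <;> ext i <;> simp [mulVec, dotProduct, ← Finset.sum_mul, hX, hY] <;> ring

theorem joinL_mulVec_sum_elim_zero {x : Fin m → ℝ} (hx : LX *ᵥ x = 0) (hsum : ∑ i, x i = 0) :
    joinL m n LX LY *ᵥ Sum.elim x 0 = (n : ℝ) • Sum.elim x 0 := by
  rw [joinL_mulVec_sum_elim, hx, hsum]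
  ext (i | i) <;> simp

noncomputable def isolatedPairAmplitude (m n : ℕ) (t : ℝ) : ℂ :=
  ((1 / (m + n) : ℝ) : ℂ) + ((n / (m * (m + n)) : ℝ) : ℂ) * cexp (((m + n) * t : ℝ) * I)
    - ((1 / m : ℝ) : ℂ) * cexp ((n * t : ℝ) * I)

theorem transU_joinL_inl_inl (hm : 0 < m) (hX : ∀ i, ∑ j, LX i j = 0)
    (hY : ∀ i, ∑ j, LY i j = 0) {u v : Fin m} (hcol : ∀ i, LX i v = 0) (huv : u ≠ v) (t : ℝ) :
    transU (joinL m n LX LY) t (Sum.inl u) (Sum.inl v) = isolatedPairAmplitude m n t := by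
  have hm' : (m : ℂ) ≠ 0 := by exact_mod_cast hm.ne'
  have hmn : (m : ℂ) + n ≠ 0 := by exact_mod_cast (by positivity : m + n ≠ 0)
  set w₀ : Fin m ⊕ Fin n → ℝ := Sum.elim (fun _ => (1 : ℝ)) (fun _ => 1)
  set w₁ : Fin m ⊕ Fin n → ℝ := Sum.elim (fun _ => (n : ℝ)) (fun _ => -(m : ℝ))
  set w₂ : Fin m ⊕ Fin n → ℝ := Sum.elim (Pi.single v 1 - fun _ => 1 / (m : ℝ)) 0
  have h₀ : joinL m n LX LY *ᵥ w₀ = (0 : ℝ) • w₀ := by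
    rw [joinL_mulVec_sum_elim_const hX hY]
    ext (i | i) <;> simp [w₀]
  have h₁ : joinL m n LX LY *ᵥ w₁ = ((m + n : ℕ) : ℝ) • w₁ := by
    rw [joinL_mulVec_sum_elim_const hX hY]
    ext (i | i) <;> simp [w₁] <;> ring
  have h₂ : joinL m n LX LY *ᵥ w₂ = (n : ℝ) • w₂ := by
    refine joinL_mulVec_sum_elim_zero ?_ ?_
    · rw [mulVec_sub, mulVec_single_one]
      ext i
      simp [hcol, mulVec, dotProduct, ← Finset.sum_mul, hX]
    · simp [Finset.sum_sub_distrib, hm.ne']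
  have hsingle : (fun k => ((Pi.single (Sum.inl v) 1 : Fin m ⊕ Fin n → ℝ) k : ℂ)) =
      ((1 / (m + n) : ℝ) : ℂ) • (fun k => (w₀ k : ℂ)) +
        ((1 / (m * (m + n)) : ℝ) : ℂ) • (fun k => (w₁ k : ℂ)) + fun k => (w₂ k : ℂ) := by
    ext (i | i)
    · by_cases hi : i = v <;> simp [w₀, w₁, w₂, hi] <;> field_simp <;> ring
    · simp [w₀, w₁, w₂]
      field_simp
      ring
  rw [transU_apply_eq_mulVec_single, hsingle, mulVec_add, mulVec_add, mulVec_smul, mulVec_smul,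
    transU_mulVec_ofReal_of_mulVec_eq_smul h₀, transU_mulVec_ofReal_of_mulVec_eq_smul h₁,
    transU_mulVec_ofReal_of_mulVec_eq_smul h₂]
  simp [isolatedPairAmplitude, w₀, w₁, w₂, huv]
  field_simp
  ring

end Join

namespace Complex

theorem norm_ofReal_add_mul_add_mul_le {a b c : ℝ} (ha : 0 ≤ a) (hb : 0 ≤ b) (hc : 0 ≤ c)
    {z w : ℂ} (hz : ‖z‖ = 1) (hw : ‖w‖ = 1) : ‖(a : ℂ) + b * z + c * w‖ ≤ a + b + c := by
  calc ‖(a : ℂ) + b * z + c * w‖ ≤ ‖(a : ℂ)‖ + ‖(b : ℂ) * z‖ + ‖(c : ℂ) * w‖ := norm_add₃_le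
    _ = a + b + c := by simp [hz, hw, abs_of_nonneg, ha, hb, hc]

theorem eq_one_of_norm_ofReal_add_mul_eq {a b : ℝ} (ha : 0 < a) (hb : 0 < b) {z : ℂ}
    (hz : ‖z‖ = 1) (h : ‖(a : ℂ) + b * z‖ = a + b) : z = 1 := by
  have hray : SameRay ℝ (a : ℂ) (b * z) :=
    sameRay_iff_norm_add.mpr (by simp [h, hz, abs_of_pos ha, abs_of_pos hb])
  rw [sameRay_iff_norm_smul_eq] at hray
  simp only [norm_real, Real.norm_eq_abs, abs_of_pos ha, norm_mul, hz, abs_of_pos hb, mul_one,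
    real_smul] at hray
  have hab : (a : ℂ) * b ≠ 0 := by exact_mod_cast (mul_pos ha hb).ne'
  exact mul_left_cancel₀ hab (by linear_combination hray)

theorem eq_one_of_norm_ofReal_add_mul_add_mul_eq_one {a b c : ℝ} (ha : 0 < a) (hb : 0 < b)
    (hc : 0 < c) (habc : a + b + c = 1) {z w : ℂ} (hz : ‖z‖ = 1) (hw : ‖w‖ = 1)
    (h : ‖(a : ℂ) + b * z + c * w‖ = 1) : z = 1 ∧ w = 1 := by
  have hab : ‖(a : ℂ) + b * z‖ = a + b := by
    refine le_antisymm (by simpa using norm_ofReal_add_mul_add_mul_le ha.le hb.le le_rfl hz hz) ?_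
    have := norm_add_le ((a : ℂ) + b * z) (c * w)
    simp only [h, norm_mul, norm_real, Real.norm_eq_abs, abs_of_pos hc, hw] at this
    linarith
  have hz1 := eq_one_of_norm_ofReal_add_mul_eq ha hb hz hab
  refine ⟨hz1, eq_one_of_norm_ofReal_add_mul_eq (add_pos ha hb) hc hw ?_⟩
  rw [hz1, mul_one] at h
  push_cast
  rw [habc]
  exact h

theorem exists_int_eq_of_exp_mul_I_eq_one {x : ℝ} (h : cexp (x * I) = 1) :
    ∃ k : ℤ, x = k * (2 * Real.pi) := by
  obtain ⟨k, hk⟩ := exp_eq_one_iff.mp h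
  exact ⟨k, by simpa using congrArg im hk⟩

end Complex

theorem Int.emod_four_eq_two_of_two_mul_mul_eq {n k l : ℤ}
    (h : 2 * n * k = (n + 2) * (2 * l - 1)) : n % 4 = 2 := by
  have hmod : ∀ n k l : ZMod 4, 2 * n * k = (n + 2) * (2 * l - 1) → n = 2 := by decide
  have := hmod n k l (by exact_mod_cast congrArg (Int.cast : ℤ → ZMod 4) h)
  exact (ZMod.intCast_eq_intCast_iff' n 2 4).mp (by exact_mod_cast this)

theorem Nat.mod_four_eq_two_of_exp_mul_I {n : ℕ} {t : ℝ}
    (h₁ : cexp (((2 + n) * t : ℝ) * I) = 1) (h₂ : cexp ((n * t : ℝ) * I) = -1) :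
    n % 4 = 2 := by
  obtain ⟨k, hk⟩ := Complex.exists_int_eq_of_exp_mul_I_eq_one h₁
  obtain ⟨l, hl⟩ := Complex.exists_int_eq_of_exp_mul_I_eq_one (x := n * t + Real.pi)
    (by rw [Complex.ofReal_add, add_mul, Complex.exp_add, h₂, Complex.exp_pi_mul_I]; norm_num)
  have hR : (2 * n * k : ℝ) * Real.pi = ((n + 2) * (2 * l - 1) : ℝ) * Real.pi := by
    linear_combination -(n : ℝ) * hk + (2 + n) * hl
  have hZ : 2 * (n : ℤ) * k = (n + 2) * (2 * l - 1) := by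
    exact_mod_cast mul_right_cancel₀ Real.pi_ne_zero hR
  have := Int.emod_four_eq_two_of_two_mul_mul_eq hZ
  omega

theorem isolatedPairAmplitude_eq_add_mul_add_mul (m n : ℕ) (t : ℝ) :
    isolatedPairAmplitude m n t = ((1 / (m + n) : ℝ) : ℂ)
      + ((n / (m * (m + n)) : ℝ) : ℂ) * cexp (((m + n) * t : ℝ) * I)
      + ((1 / m : ℝ) : ℂ) * -cexp ((n * t : ℝ) * I) := by
  rw [isolatedPairAmplitude, mul_neg, ← sub_eq_add_neg]

theorem eq_two_of_norm_isolatedPairAmplitude_eq_one {m n : ℕ} {t : ℝ} (hm : 2 ≤ m)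
    (h : ‖isolatedPairAmplitude m n t‖ = 1) : m = 2 := by
  have hle : ‖isolatedPairAmplitude m n t‖ ≤ 2 / m := by
    calc ‖isolatedPairAmplitude m n t‖ ≤ 1 / (m + n) + n / (m * (m + n)) + 1 / m := by
          rw [isolatedPairAmplitude_eq_add_mul_add_mul]
          exact Complex.norm_ofReal_add_mul_add_mul_le (by positivity) (by positivity)
            (by positivity) (Complex.norm_exp_ofReal_mul_I _)
            (by rw [norm_neg, Complex.norm_exp_ofReal_mul_I])
      _ = 2 / m := by field_simp; ring
  rw [h, le_div_iff₀ (by positivity), one_mul] at hle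
  have : m ≤ 2 := by exact_mod_cast hle
  omega

theorem mod_four_eq_two_of_norm_isolatedPairAmplitude_two_eq_one {n : ℕ} {t : ℝ} (hn : 1 ≤ n)
    (h : ‖isolatedPairAmplitude 2 n t‖ = 1) : n % 4 = 2 := by
  rw [isolatedPairAmplitude_eq_add_mul_add_mul] at h
  obtain ⟨h₁, h₂⟩ := Complex.eq_one_of_norm_ofReal_add_mul_add_mul_eq_one (by positivity)
    (by positivity) (by positivity) (by field_simp; ring) (Complex.norm_exp_ofReal_mul_I _)
    (by rw [norm_neg, Complex.norm_exp_ofReal_mul_I]) h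
  rw [Nat.cast_ofNat] at h₁
  exact Nat.mod_four_eq_two_of_exp_mul_I h₁ (neg_eq_iff_eq_neg.mp h₂)

theorem norm_isolatedPairAmplitude_two_pi_div_two {n : ℕ} (hn : n % 4 = 2) :
    ‖isolatedPairAmplitude 2 n (Real.pi / 2)‖ = 1 := by
  obtain ⟨q, hq⟩ : ∃ q, n = 4 * q + 2 := ⟨n / 4, by omega⟩
  have h₁ : cexp (((2 + n) * (Real.pi / 2) : ℝ) * I) = 1 := by
    rw [← Complex.exp_nat_mul_two_pi_mul_I (q + 1)]
    push_cast [hq]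
    ring_nf
  have h₂ : cexp ((n * (Real.pi / 2) : ℝ) * I) = -1 := by
    rw [← mul_one (-1 : ℂ), ← Complex.exp_pi_mul_I, ← Complex.exp_nat_mul_two_pi_mul_I q,
      ← Complex.exp_add]
    push_cast [hq]
    ring_nf
  have hsum : (1 / (2 + n) + n / (2 * (2 + n)) + 1 / 2 : ℝ) = 1 := by
    field_simp
    ring
  rw [isolatedPairAmplitude_eq_add_mul_add_mul, Nat.cast_ofNat, h₁, h₂, mul_one, neg_neg,
    mul_one, ← Complex.ofReal_add, ← Complex.ofReal_add, hsum, Complex.ofReal_one, norm_one]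

theorem stmt16_general (m n : ℕ) (hm : 2 ≤ m) (hn : 1 ≤ n)
    (LX : Matrix (Fin m) (Fin m) ℝ) (LY : Matrix (Fin n) (Fin n) ℝ)
    (hLXsymm : LX.IsSymm) (hLXrow : ∀ i, ∑ j, LX i j = 0)
    (hLYrow : ∀ i, ∑ j, LY i j = 0)
    (u v : Fin m) (huv : u ≠ v)
    (hv : ∀ j, LX v j = 0) :
    HasPST (joinL m n LX LY) (Sum.inl u) (Sum.inl v) ↔ (m = 2 ∧ n % 4 = 2) := by
  have hcol : ∀ i, LX i v = 0 := fun i => by rw [hLXsymm.apply]; exact hv i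
  simp only [HasPST, transU_joinL_inl_inl (by omega) hLXrow hLYrow hcol huv]
  constructor
  · rintro ⟨t, -, ht⟩
    obtain rfl := eq_two_of_norm_isolatedPairAmplitude_eq_one hm ht
    exact ⟨rfl, mod_four_eq_two_of_norm_isolatedPairAmplitude_two_eq_one hn ht⟩
  · rintro ⟨rfl, hn4⟩
    exact ⟨Real.pi / 2, by positivity, norm_isolatedPairAmplitude_two_pi_div_two hn4⟩

theorem stmt16 (m n : ℕ) (hm : 2 ≤ m) (hn : 1 ≤ n)
    (LX : Matrix (Fin m) (Fin m) ℝ) (LY : Matrix (Fin n) (Fin n) ℝ)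
    (hLXsymm : LX.IsSymm) (hLXrow : ∀ i, ∑ j, LX i j = 0)
    (hLXoffdiag : ∀ i j, i ≠ j → LX i j ≤ 0)
    (hLYsymm : LY.IsSymm) (hLYrow : ∀ i, ∑ j, LY i j = 0)
    (hLYoffdiag : ∀ i j, i ≠ j → LY i j ≤ 0)
    (u v : Fin m) (huv : u ≠ v)
    (hu : ∀ j, LX u j = 0) (hv : ∀ j, LX v j = 0) :
    HasPST (joinL m n LX LY) (Sum.inl u) (Sum.inl v) ↔ (m = 2 ∧ n % 4 = 2) :=
  stmt16_general m n hm hn LX LY hLXsymm hLXrow hLYrow u v huv hv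
end
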